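/- Let n be an even positive integer and V a real n×n circulant symmetric positive definite matrix with first column (v_0,…,v_{n−1}). Then Tr(F_n · log V) = log(Λ_0) − log(Λ_{n/2}), where Λ_0 = ∑_{l=0}^{n−1} v_l and Λ_{n/2} = ∑_{l=0}^{n−1} (−1)^l v_l are the eigenvalues of V corresponding to the Fourier modes k = 0 and k = n/2 (both are positive since V is positive definite). -/

import Mathlib

open Matrix

/-- The `m × m` flip matrix `F_m`: with 0-based indices, entry `(i,j)` is `1`
iff `i + j = m - 1`. -/
noncomputable def flipMat (m : ℕ) : Matrix (Fin m) (Fin m) ℝ :=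
  Matrix.of fun i j => if (i : ℕ) + (j : ℕ) = m - 1 then 1 else 0

/-- Matrix logarithm defined via the continuous functional calculus
(spectral calculus). -/
noncomputable def mlog {k : ℕ} (M : Matrix (Fin k) (Fin k) ℝ) :
    Matrix (Fin k) (Fin k) ℝ :=
  cfc Real.log M

/-!
The constant vector and the alternating vector `i ↦ (-1)^i` are additive characters of
`Fin (m + m)`, hence eigenvectors of every circulant matrix, with eigenvalues `Λ₀` and
`Λ_{n/2}`; positive definiteness makes both positive. On the finite spectrum of `V`, `log`
agrees with its Lagrange interpolating polynomial, so `log V` is a polynomial in `V`: it is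
again circulant, with first column `a` say, and has the same eigenvectors, with eigenvalues
`∑ a_l = log Λ₀` and `∑ (-1)^l a_l = log Λ_{n/2}`. Finally
`Tr(F · circulant a) = ∑_i a_{2i+1}` counts every odd-indexed entry of `a` twice, i.e. equals
`∑ a_l - ∑ (-1)^l a_l`.
-/

open Finset Polynomial Module.End

theorem cfc_eq_aeval_interpolate {A : Type*} {p : A → Prop} [Ring A] [StarRing A]
    [TopologicalSpace A] [Algebra ℝ A] [ContinuousFunctionalCalculus ℝ A p]
    (f : ℝ → ℝ) {a : A} (ha : p a) (hfin : (spectrum ℝ a).Finite) :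
    cfc f a = aeval a (Lagrange.interpolate hfin.toFinset id f) := by
  rw [← cfc_polynomial _ a ha]
  exact cfc_congr fun x hx ↦
    (Lagrange.eval_interpolate_at_node f (Set.injOn_id _) (hfin.mem_toFinset.2 hx)).symm

namespace Matrix

variable {n : Type*} [Fintype n] [DecidableEq n]

theorem IsHermitian.cfc_mem_adjoin {M : Matrix n n ℝ} (hM : M.IsHermitian) (f : ℝ → ℝ) :
    cfc f M ∈ Algebra.adjoin ℝ {M} := by
  rw [cfc_eq_aeval_interpolate f hM.isSelfAdjoint M.finite_real_spectrum]
  exact aeval_mem_adjoin_singleton ℝ M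

theorem mem_spectrum_of_hasEigenvector {R : Type*} [Field R] {M : Matrix n n R} {c : R}
    {x : n → R} (h : HasEigenvector (toLin' M) c x) : c ∈ spectrum R M :=
  spectrum_toLin' M ▸ (hasEigenvalue_of_hasEigenvector h).mem_spectrum

theorem IsHermitian.hasEigenvector_cfc {M : Matrix n n ℝ} (hM : M.IsHermitian) (f : ℝ → ℝ)
    {c : ℝ} {x : n → ℝ} (h : HasEigenvector (toLin' M) c x) :
    HasEigenvector (toLin' (cfc f M)) (f c) x := by
  have hfin := M.finite_real_spectrum
  set p := Lagrange.interpolate hfin.toFinset id f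
  have hpc : p.eval c = f c := Lagrange.eval_interpolate_at_node f (Set.injOn_id _)
    (hfin.mem_toFinset.2 (mem_spectrum_of_hasEigenvector h))
  refine ⟨mem_eigenspace_iff.2 ?_, h.2⟩
  calc toLin' (cfc f M) x = aeval (toLin' M) p x := by
        rw [cfc_eq_aeval_interpolate f hM.isSelfAdjoint hfin]
        exact LinearMap.congr_fun (aeval_algHom_apply toLinAlgEquiv' M p).symm x
    _ = f c • x := by rw [aeval_apply_of_hasEigenvector h, hpc]

theorem PosDef.pos_of_hasEigenvector {M : Matrix n n ℝ} (hM : M.PosDef) {c : ℝ} {x : n → ℝ}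
    (h : HasEigenvector (toLin' M) c x) : 0 < c := by
  obtain ⟨i, rfl⟩ :=
    hM.isHermitian.spectrum_real_eq_range_eigenvalues ▸ mem_spectrum_of_hasEigenvector h
  exact hM.eigenvalues_pos i

end Matrix

section Circulant

variable {R G : Type*} [AddCommGroup G] [Fintype G]

variable (R G) in
def circulantSubalgebra [CommSemiring R] [DecidableEq G] : Subalgebra R (Matrix G G R) where
  carrier := Set.range circulant
  mul_mem' := by
    rintro _ _ ⟨v, rfl⟩ ⟨w, rfl⟩
    exact ⟨_, (circulant_mul v w).symm⟩
  add_mem' := by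
    rintro _ _ ⟨v, rfl⟩ ⟨w, rfl⟩
    exact ⟨v + w, circulant_add v w⟩
  algebraMap_mem' r := ⟨Pi.single 0 r, by rw [circulant_single, algebraMap_eq_diagonal]; rfl⟩

theorem Matrix.IsHermitian.cfc_mem_circulantSubalgebra [DecidableEq G] {v : G → ℝ}
    (hv : (circulant v).IsHermitian) (f : ℝ → ℝ) :
    cfc f (circulant v) ∈ circulantSubalgebra ℝ G :=
  Algebra.adjoin_le (Set.singleton_subset_iff.2 (Set.mem_range_self v)) (hv.cfc_mem_adjoin f)

theorem circulant_mulVec_addChar [CommRing R] (w : G → R) (ψ : AddChar G R) :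
    circulant w *ᵥ ψ = (∑ l, w l * ψ (-l)) • ⇑ψ := by
  ext i
  simp only [mulVec, dotProduct, circulant_apply, Pi.smul_apply, smul_eq_mul]
  calc ∑ j, w (i - j) * ψ j = ∑ l, w l * ψ (i - l) := by
        rw [← (Equiv.subLeft i).sum_comp fun l ↦ w l * ψ (i - l)]
        simp
    _ = (∑ l, w l * ψ (-l)) * ψ i := by
        simp only [sub_eq_add_neg, AddChar.map_add_eq_mul, sum_mul]
        exact sum_congr rfl fun l _ ↦ by ring

theorem hasEigenvector_circulant_addChar [CommRing R] [Nontrivial R] [DecidableEq G]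
    (w : G → R) (ψ : AddChar G R) :
    HasEigenvector (toLin' (circulant w)) (∑ l, w l * ψ (-l)) ψ :=
  ⟨mem_eigenspace_iff.2 (circulant_mulVec_addChar w ψ), ψ.coe_ne_zero⟩

theorem eq_sum_mul_addChar_of_hasEigenvector [CommRing R] [DecidableEq G] {w : G → R}
    {ψ : AddChar G R} {c : R} (h : HasEigenvector (toLin' (circulant w)) c ψ) :
    c = ∑ l, w l * ψ (-l) := by
  simpa using congrFun (h.apply_eq_smul.symm.trans (circulant_mulVec_addChar w ψ)) 0

theorem sum_mul_addChar_neg_of_circulant_eq_cfc [DecidableEq G] {v a : G → ℝ}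
    (hv : (circulant v).IsHermitian) {f : ℝ → ℝ} (ha : circulant a = cfc f (circulant v))
    (ψ : AddChar G ℝ) : ∑ l, a l * ψ (-l) = f (∑ l, v l * ψ (-l)) :=
  (eq_sum_mul_addChar_of_hasEigenvector
    (ha ▸ hv.hasEigenvector_cfc f (hasEigenvector_circulant_addChar v ψ))).symm

end Circulant

section altChar

theorem neg_one_pow_mod_of_even {R : Type*} [Monoid R] [HasDistribNeg R] {n : ℕ}
    (hn : Even n) (k : ℕ) : (-1 : R) ^ (k % n) = (-1) ^ k := by
  conv_rhs => rw [← Nat.mod_add_div k n, pow_add, pow_mul, hn.neg_one_pow, one_pow, mul_one]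

variable (R : Type*) [Monoid R] [HasDistribNeg R] {n : ℕ} [NeZero n] (hn : Even n)

def altChar : AddChar (Fin n) R where
  toFun l := (-1) ^ (l : ℕ)
  map_zero_eq_one' := by simp
  map_add_eq_mul' a b := by rw [Fin.val_add, neg_one_pow_mod_of_even hn, pow_add]

variable {R}

theorem altChar_apply (l : Fin n) : altChar R hn l = (-1) ^ (l : ℕ) := rfl

theorem altChar_neg (l : Fin n) : altChar R hn (-l) = altChar R hn l :=
  calc altChar R hn (-l) = altChar R hn (-l) * (altChar R hn l * altChar R hn l) := by
        rw [altChar_apply hn l, ← pow_add, (Even.add_self (l : ℕ)).neg_one_pow, mul_one]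
    _ = altChar R hn l := by
        rw [← mul_assoc, ← AddChar.map_add_eq_mul, neg_add_cancel, AddChar.map_zero_eq_one,
          one_mul]

end altChar

theorem Fin.neg_rev_zero {n : ℕ} [NeZero n] : -Fin.rev (0 : Fin n) = 1 := by
  obtain ⟨k, rfl⟩ := Nat.exists_eq_succ_of_ne_zero (NeZero.ne n)
  exact Fin.neg_last k

theorem flipMat_apply {n : ℕ} (i j : Fin n) :
    flipMat n i j = if i = Fin.rev j then 1 else 0 := by
  simp only [flipMat, of_apply, Fin.ext_iff, Fin.val_rev]
  congr 1
  grind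

theorem trace_flipMat_mul_circulant {n : ℕ} [NeZero n] (a : Fin n → ℝ) :
    (flipMat n * circulant a).trace = ∑ i, a (i + i + 1) := by
  rw [trace_mul_comm]
  refine sum_congr rfl fun i _ ↦ ?_
  have hrev : Fin.rev i = Fin.rev 0 - i := by simpa using Fin.rev_add 0 i
  simp only [diag_apply, Matrix.mul_apply, flipMat_apply, circulant_apply, mul_ite, mul_one,
    mul_zero, sum_ite_eq', mem_univ, if_true]
  rw [hrev, sub_sub_eq_add_sub, sub_eq_add_neg, Fin.neg_rev_zero]

theorem sum_range_add_self_one_sub_neg_one_pow_mul {R : Type*} [CommRing R] (b : ℕ → R)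
    (m : ℕ) :
    ∑ k ∈ range (m + m), (1 - (-1) ^ k) * b k = 2 * ∑ k ∈ range m, b (2 * k + 1) := by
  induction m with
  | zero => simp
  | succ m ih =>
    rw [show m + 1 + (m + 1) = m + m + 1 + 1 by ring, sum_range_succ, sum_range_succ, ih,
      sum_range_succ, pow_succ, (Even.add_self m).neg_one_pow, ← two_mul]
    ring

open Fin.NatCast in
theorem Fin.sum_add_self_add_one {R : Type*} [CommRing R] {m : ℕ} [NeZero (m + m)]
    (a : Fin (m + m) → R) :
    ∑ i, a (i + i + 1) = ∑ l, a l - ∑ l : Fin (m + m), (-1) ^ (l : ℕ) * a l := by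
  set b : ℕ → R := fun k ↦ a k
  have hb (l : Fin (m + m)) : a l = b l := by simp [b]
  have hperiodic (k : ℕ) : b (2 * (m + k) + 1) = b (2 * k + 1) := by
    simp only [b]
    rw [show 2 * (m + k) + 1 = m + m + (2 * k + 1) by ring, Nat.cast_add, Fin.natCast_self,
      zero_add]
  calc ∑ i : Fin (m + m), a (i + i + 1) = ∑ k ∈ range (m + m), b (2 * k + 1) := by
        rw [← Fin.sum_univ_eq_sum_range]
        exact sum_congr rfl fun i _ ↦ by simp [b, two_mul]
    _ = 2 * ∑ k ∈ range m, b (2 * k + 1) := by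
        rw [sum_range_add]
        simp only [hperiodic]
        ring
    _ = ∑ k ∈ range (m + m), (1 - (-1) ^ k) * b k :=
        (sum_range_add_self_one_sub_neg_one_pow_mul b m).symm
    _ = ∑ l, a l - ∑ l : Fin (m + m), (-1) ^ (l : ℕ) * a l := by
        rw [← Fin.sum_univ_eq_sum_range, ← sum_sub_distrib]
        simp [hb, sub_mul]

theorem trace_flip_log_eq_log_fourier_ratio_general
    (m : ℕ) (hm : 0 < m)
    (v : Fin (m + m) → ℝ)
    (V : Matrix (Fin (m + m)) (Fin (m + m)) ℝ) (hV : V = Matrix.circulant v)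
    (hVpd : V.PosDef) :
    0 < ∑ l : Fin (m + m), v l
      ∧ 0 < ∑ l : Fin (m + m), (-1 : ℝ) ^ (l : ℕ) * v l
      ∧ (flipMat (m + m) * mlog V).trace
          = Real.log (∑ l : Fin (m + m), v l)
            - Real.log (∑ l : Fin (m + m), (-1 : ℝ) ^ (l : ℕ) * v l) := by
  have : NeZero (m + m) := ⟨by omega⟩
  subst hV
  have hn : Even (m + m) := Even.add_self m
  have hsum_alt (w : Fin (m + m) → ℝ) :
      ∑ l, w l * altChar ℝ hn (-l) = ∑ l : Fin (m + m), (-1) ^ (l : ℕ) * w l :=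
    sum_congr rfl fun l _ ↦ by rw [altChar_neg, altChar_apply, mul_comm]
  obtain ⟨a, ha⟩ := hVpd.isHermitian.cfc_mem_circulantSubalgebra Real.log
  have hlog := sum_mul_addChar_neg_of_circulant_eq_cfc hVpd.isHermitian ha
  refine ⟨?_, ?_, ?_⟩
  · simpa using hVpd.pos_of_hasEigenvector (hasEigenvector_circulant_addChar v 1)
  · simpa [hsum_alt] using
      hVpd.pos_of_hasEigenvector (hasEigenvector_circulant_addChar v (altChar ℝ hn))
  · rw [mlog, ← ha, trace_flipMat_mul_circulant, Fin.sum_add_self_add_one]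
    simpa [hsum_alt] using congrArg₂ (· - ·) (hlog 1) (hlog (altChar ℝ hn))

/-- For `n = m + m` even positive and `V` circulant symmetric
positive definite with first column `v`, the Fourier eigenvalues
`Λ₀ = ∑ v_l` and `Λ_{n/2} = ∑ (-1)^l v_l` are positive and
`Tr(F_n log V) = log Λ₀ - log Λ_{n/2}`. -/
theorem trace_flip_log_eq_log_fourier_ratio
    (m : ℕ) (hm : 0 < m)
    (v : Fin (m + m) → ℝ) (hv : ∀ l, v (-l) = v l)
    (V : Matrix (Fin (m + m)) (Fin (m + m)) ℝ) (hV : V = Matrix.circulant v)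
    (hVpd : V.PosDef) :
    0 < ∑ l : Fin (m + m), v l
      ∧ 0 < ∑ l : Fin (m + m), (-1 : ℝ) ^ (l : ℕ) * v l
      ∧ (flipMat (m + m) * mlog V).trace
          = Real.log (∑ l : Fin (m + m), v l)
            - Real.log (∑ l : Fin (m + m), (-1 : ℝ) ^ (l : ℕ) * v l) :=
  trace_flip_log_eq_log_fourier_ratio_general m hm v V hV hVpd
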